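/- Let Γ be a finite simple graph with vertex set V = {1, …, n} and let X ⊆ V be a clique of Γ. Then X is retractive in P_Γ: the restriction of the quotient map ρ_X : P_Γ → P_X to the subgroup of P_Γ generated by {a_{ij} : i < j, {i,j} ⊆ X} is injective. -/

import Mathlib

/-
Killing every generator `a_{ij}` with `{i,j} ⊄ X` is an endomorphism of the free group that
sends each relator of `P_Γ` either to itself or to `1`: a relator involving a killed generator
collapses to a commutator with a trivial entry. It therefore descends to a homomorphism
`P_X → P_Γ`, which fixes the generators `a_{ij}` with `{i,j} ⊆ X` and so is a left inverse of
`ρ_X` on the subgroup they generate.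
-/

abbrev PBIdx (n : ℕ) : Type := {p : Fin n × Fin n // p.1 < p.2}

namespace GraphicBraid

open scoped commutatorElement

def ofIdx {n : ℕ} {i j : Fin n} (h : i < j) : FreeGroup (PBIdx n) :=
  FreeGroup.of ⟨(i, j), h⟩

/-- The Artin relators for the pure braid group `P_n`. -/
def pureBraidRels (n : ℕ) : Set (FreeGroup (PBIdx n)) :=
  {w | ∃ (i j r s : Fin n) (hij : i < j) (hrs : r < s),
      (s < i ∨ (i < r ∧ s < j)) ∧ w = ⁅ofIdx hij, ofIdx hrs⁆} ∪
  {w | ∃ (r i s j : Fin n) (hri : r < i) (his : i < s) (hsj : s < j),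
      w = ⁅ofIdx (his.trans hsj), ofIdx hsj * ofIdx (hri.trans his) * (ofIdx hsj)⁻¹⁆} ∪
  {w | ∃ (i j r : Fin n) (hij : i < j) (hjr : j < r),
      w = ⁅ofIdx hij * ofIdx (hij.trans hjr), ofIdx hjr⁆ ∨
      w = ⁅ofIdx hij, ofIdx (hij.trans hjr) * ofIdx hjr⁆}

/-- Relators killing the generators corresponding to non-edges of `Γ`. -/
def nonEdgeRels {n : ℕ} (Γ : SimpleGraph (Fin n)) : Set (FreeGroup (PBIdx n)) :=
  {w | ∃ p : PBIdx n, ¬ Γ.Adj p.1.1 p.1.2 ∧ w = FreeGroup.of p}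

def graphicRels {n : ℕ} (Γ : SimpleGraph (Fin n)) : Set (FreeGroup (PBIdx n)) :=
  pureBraidRels n ∪ nonEdgeRels Γ

/-- The graphic pure braid group `P_Γ`. -/
abbrev GPB {n : ℕ} (Γ : SimpleGraph (Fin n)) : Type := PresentedGroup (graphicRels Γ)

/-- The image of the Artin generator `a_{ij}` in `P_Γ`. -/
def agen {n : ℕ} (Γ : SimpleGraph (Fin n)) {i j : Fin n} (h : i < j) : GPB Γ :=
  PresentedGroup.of (rels := graphicRels Γ) ⟨(i, j), h⟩

/-- Relators killing the generators `a_{ij}` with `{i,j} ⊄ X`. -/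
def killRels {n : ℕ} (X : Set (Fin n)) : Set (FreeGroup (PBIdx n)) :=
  {w | ∃ p : PBIdx n, ¬ (p.1.1 ∈ X ∧ p.1.2 ∈ X) ∧ w = FreeGroup.of p}

/-- The quotient `P_X` of `P_Γ` obtained by killing all generators `a_{ij}` with `{i,j} ⊄ X`. -/
abbrev GPBX {n : ℕ} (Γ : SimpleGraph (Fin n)) (X : Set (Fin n)) : Type :=
  PresentedGroup (graphicRels Γ ∪ killRels X)

/-- The canonical surjection between presented groups when the set of relators grows. -/
def quotMap {α : Type*} {R S : Set (FreeGroup α)} (h : R ⊆ S) :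
    PresentedGroup R →* PresentedGroup S :=
  QuotientGroup.map _ _ (MonoidHom.id _)
    (fun _ hx => Subgroup.normalClosure_mono h hx)

/-- The quotient map `ρ_X : P_Γ → P_X`. -/
def rho {n : ℕ} (Γ : SimpleGraph (Fin n)) (X : Set (Fin n)) : GPB Γ →* GPBX Γ X :=
  quotMap Set.subset_union_left

lemma killRels_anti {n : ℕ} {X Y : Set (Fin n)} (h : X ⊆ Y) : killRels Y ⊆ killRels X := by
  rintro w ⟨p, hp, rfl⟩
  exact ⟨p, fun hx => hp ⟨h hx.1, h hx.2⟩, rfl⟩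

/-- The quotient map `P_Y → P_X` for `X ⊆ Y`. -/
def rhoDown {n : ℕ} (Γ : SimpleGraph (Fin n)) {X Y : Set (Fin n)} (h : X ⊆ Y) :
    GPBX Γ Y →* GPBX Γ X :=
  quotMap (Set.union_subset_union_right _ (killRels_anti h))

/-- `X` is a maximal clique of `Γ`. -/
def MaxClique {n : ℕ} (Γ : SimpleGraph (Fin n)) (X : Set (Fin n)) : Prop :=
  Γ.IsClique X ∧ ∀ Y : Set (Fin n), Γ.IsClique Y → X ⊆ Y → Y = X


/-- The subgroup of `P_Γ` generated by the generators `a_{ij}` with `{i,j} ⊆ X`. -/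
def cliqueSubgroup {n : ℕ} (Γ : SimpleGraph (Fin n)) (X : Set (Fin n)) : Subgroup (GPB Γ) :=
  Subgroup.closure {g : GPB Γ | ∃ p : PBIdx n, (p.1.1 ∈ X ∧ p.1.2 ∈ X) ∧ g = PresentedGroup.of p}

/-- The bipartite incidence graph of edges and 3-cliques (triangles) of `Γ`. -/
def incidenceGraph {n : ℕ} (Γ : SimpleGraph (Fin n)) :
    SimpleGraph (Γ.edgeSet ⊕ {T : Finset (Fin n) // Γ.IsNClique 3 T}) where
  Adj x y :=
    match x, y with
    | Sum.inl e, Sum.inr T => ∀ v : Fin n, v ∈ (e : Sym2 (Fin n)) → v ∈ T.1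
    | Sum.inr T, Sum.inl e => ∀ v : Fin n, v ∈ (e : Sym2 (Fin n)) → v ∈ T.1
    | _, _ => False
  symm := ⟨by rintro (e | T) (f | S) h <;> exact h⟩
  loopless := ⟨by rintro (e | T) h <;> exact h⟩

section Retraction

variable {α : Type*} {R S : Set (FreeGroup α)}

def quotLift (φ : FreeGroup α →* FreeGroup α)
    (hφ : ∀ r ∈ S, φ r ∈ Subgroup.normalClosure R) :
    PresentedGroup S →* PresentedGroup R :=
  QuotientGroup.map _ _ φ (Subgroup.normalClosure_le_normal hφ)

theorem quotMap_injOn_closure (h : R ⊆ S) (φ : FreeGroup α →* FreeGroup α)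
    (hφ : ∀ r ∈ S, φ r ∈ Subgroup.normalClosure R) {T : Set α}
    (hT : ∀ a ∈ T, φ (FreeGroup.of a) = FreeGroup.of a) :
    Set.InjOn (quotMap h)
      (Subgroup.closure (PresentedGroup.of (rels := R) '' T) : Set (PresentedGroup R)) := by
  refine Set.LeftInvOn.injOn (f₁' := quotLift φ hφ) fun g hg => ?_
  refine MonoidHom.eqOn_closure (f := (quotLift φ hφ).comp (quotMap h)) (g := .id _) ?_ hg
  rintro _ ⟨a, ha, rfl⟩
  exact congrArg (PresentedGroup.mk R) (hT a ha)

end Retraction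

open Classical in
noncomputable def killOutside {n : ℕ} (X : Set (Fin n)) :
    FreeGroup (PBIdx n) →* FreeGroup (PBIdx n) :=
  FreeGroup.lift fun p => if p.1.1 ∈ X ∧ p.1.2 ∈ X then FreeGroup.of p else 1

section KillOutside

variable {n : ℕ} {X : Set (Fin n)}

theorem killOutside_of_mem {p : PBIdx n} (hp : p.1.1 ∈ X ∧ p.1.2 ∈ X) :
    killOutside X (FreeGroup.of p) = FreeGroup.of p := by
  simp [killOutside, hp]

theorem killOutside_of_notMem {p : PBIdx n} (hp : ¬(p.1.1 ∈ X ∧ p.1.2 ∈ X)) :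
    killOutside X (FreeGroup.of p) = 1 := by
  simp [killOutside, hp]

theorem killOutside_pureBraidRels {w : FreeGroup (PBIdx n)} (hw : w ∈ pureBraidRels n) :
    killOutside X w = w ∨ killOutside X w = 1 := by
  classical
  have hof {i j : Fin n} (h : i < j) :
      killOutside X (ofIdx h) = if i ∈ X ∧ j ∈ X then ofIdx h else 1 := by
    split_ifs with hij
    exacts [killOutside_of_mem hij, killOutside_of_notMem hij]
  rcases hw with (⟨i, j, r, s, hij, hrs, -, rfl⟩ | ⟨r, i, s, j, hri, his, hsj, rfl⟩) |
      ⟨i, j, r, hij, hjr, rfl | rfl⟩ <;>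
    simp only [map_commutatorElement, map_mul, map_inv, hof] <;>
    split_ifs <;> simp_all

theorem killOutside_graphicRels {Γ : SimpleGraph (Fin n)} {r : FreeGroup (PBIdx n)}
    (hr : r ∈ graphicRels Γ) : killOutside X r = r ∨ killOutside X r = 1 := by
  rcases hr with hr | ⟨p, -, rfl⟩
  · exact killOutside_pureBraidRels hr
  · by_cases hp : p.1.1 ∈ X ∧ p.1.2 ∈ X
    exacts [.inl (killOutside_of_mem hp), .inr (killOutside_of_notMem hp)]

theorem killOutside_mem_normalClosure {Γ : SimpleGraph (Fin n)} :
    ∀ r ∈ graphicRels Γ ∪ killRels X,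
      killOutside X r ∈ Subgroup.normalClosure (graphicRels Γ) := by
  rintro r (hr | ⟨p, hp, rfl⟩)
  · rcases killOutside_graphicRels hr with h | h <;> rw [h]
    exacts [Subgroup.subset_normalClosure hr, one_mem _]
  · rw [killOutside_of_notMem hp]
    exact one_mem _

end KillOutside

theorem clique_retractive_general {n : ℕ} (Γ : SimpleGraph (Fin n)) (X : Set (Fin n)) :
    Set.InjOn (rho Γ X) (cliqueSubgroup Γ X : Set (GPB Γ)) := by
  have hS : cliqueSubgroup Γ X =
      Subgroup.closure (PresentedGroup.of '' {p : PBIdx n | p.1.1 ∈ X ∧ p.1.2 ∈ X}) := by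
    refine congrArg Subgroup.closure (Set.ext fun _ => ?_)
    exact exists_congr fun _ => and_congr_right' eq_comm
  rw [hS]
  exact quotMap_injOn_closure _ _ killOutside_mem_normalClosure fun _ => killOutside_of_mem

/-- A clique `X` of `Γ` is retractive in `P_Γ`: the restriction of
`ρ_X : P_Γ → P_X` to the subgroup generated by the `a_{ij}` with `{i,j} ⊆ X` is injective. -/
theorem clique_retractive {n : ℕ} (Γ : SimpleGraph (Fin n)) (X : Set (Fin n))
    (hX : Γ.IsClique X) :
    Set.InjOn (rho Γ X) (cliqueSubgroup Γ X : Set (GPB Γ)) :=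
  clique_retractive_general Γ X

end GraphicBraid
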